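/- arXiv:2512.14086 — 4 statements merged into one kernel-verified Lean document; each statement's English description precedes it below -/
import Mathlib

section
/- Let σ : ℝ → ℝ be continuously differentiable with σ'(t) → 1 as t → ∞ and σ'(t) → 0 as t → −∞. For θ, b > 0 define f(x; θ, b) = (σ(θ(x+b)) − σ(θ(x−b)))/θ − b. If additionally σ(x) = xΦ(x) with Φ(x) + Φ(−x) = 1, then f(0; θ, b) = 0 for all θ, b > 0, and for every ε > 0 and R > 0 there exist θ, b > 0 such that sup_{x ∈ [−R,R]} |f(x; θ, b) − x| ≤ ε and sup_{x ∈ [−R,R]} |f'(x; θ, b) − 1| ≤ ε. -/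
/-!
Since `Φ(x) + Φ(−x) = 1`, the odd part of `σ(x) = xΦ(x)` is `x/2`, i.e.
`σ(x) − σ(−x) = x`, which gives `f(0; θ, b) = 0`. With `b = 2R`, for `x ∈ [−R, R]`
the two arguments `θ(x ± 2R)` lie beyond `±θR`, so for large `θ` the derivative
`σ'(θ(x+b)) − σ'(θ(x−b))` is close to `1 − 0`; the mean value theorem, started at
`f(0) = 0`, then bounds `|f(x) − x|`.
-/

open Filter

/-- The clipping function `f(x; θ, b) = (σ(θ(x+b)) − σ(θ(x−b)))/θ − b`. -/
noncomputable def fclip (σ : ℝ → ℝ) (θ b x : ℝ) : ℝ :=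
  (σ (θ * (x + b)) - σ (θ * (x - b))) / θ - b

open Set Topology

section Clip

variable {σ : ℝ → ℝ}

lemma sub_neg_eq_self_of_eq_mul {Φ : ℝ → ℝ} (hσ : ∀ x, σ x = x * Φ x)
    (hΦ : ∀ x, Φ x + Φ (-x) = 1) (x : ℝ) : σ x - σ (-x) = x := by
  rw [hσ, hσ]
  linear_combination x * hΦ x

lemma fclip_zero (hσ : ∀ x, σ x - σ (-x) = x) {θ : ℝ} (hθ : θ ≠ 0) (b : ℝ) :
    fclip σ θ b 0 = 0 := by
  have h := hσ (θ * b)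
  rw [fclip, zero_add, zero_sub, mul_neg, h]
  field_simp
  ring

lemma hasDerivAt_fclip (hσ : Differentiable ℝ σ) {θ : ℝ} (hθ : θ ≠ 0) (b x : ℝ) :
    HasDerivAt (fclip σ θ b) (deriv σ (θ * (x + b)) - deriv σ (θ * (x - b))) x := by
  have hplus : HasDerivAt (fun x => σ (θ * (x + b))) (deriv σ (θ * (x + b)) * θ) x :=
    (hσ _).hasDerivAt.comp x (by simpa using ((hasDerivAt_id x).add_const b).const_mul θ)
  have hminus : HasDerivAt (fun x => σ (θ * (x - b))) (deriv σ (θ * (x - b)) * θ) x :=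
    (hσ _).hasDerivAt.comp x (by simpa using ((hasDerivAt_id x).sub_const b).const_mul θ)
  have h := ((hplus.sub hminus).div_const θ).sub_const b
  rw [← sub_mul, mul_div_cancel_right₀ _ hθ] at h
  exact h

lemma exists_forall_abs_sub_sub_one_le {g : ℝ → ℝ} (htop : Tendsto g atTop (𝓝 1))
    (hbot : Tendsto g atBot (𝓝 0)) {δ : ℝ} (hδ : 0 < δ) :
    ∃ T, ∀ s t, T ≤ s → t ≤ -T → |g s - g t - 1| ≤ δ := by
  obtain ⟨T₁, hT₁⟩ :=
    eventually_atTop.mp (htop.eventually (Metric.closedBall_mem_nhds 1 (half_pos hδ)))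
  obtain ⟨T₂, hT₂⟩ :=
    eventually_atBot.mp (hbot.eventually (Metric.closedBall_mem_nhds 0 (half_pos hδ)))
  refine ⟨max T₁ (-T₂), fun s t hs ht => ?_⟩
  have h₁ : |g s - 1| ≤ δ / 2 := hT₁ s (le_of_max_le_left hs)
  have h₂ : |g t| ≤ δ / 2 := by
    simpa using hT₂ t (by linarith [le_max_right T₁ (-T₂)])
  calc |g s - g t - 1| = |(g s - 1) + -g t| := by ring_nf
    _ ≤ |g s - 1| + |g t| := (abs_add_le _ _).trans_eq (by rw [abs_neg])
    _ ≤ δ := by linarith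

lemma eventually_forall_abs_deriv_fclip_sub_one_le (hσ : Differentiable ℝ σ)
    (htop : Tendsto (deriv σ) atTop (𝓝 1)) (hbot : Tendsto (deriv σ) atBot (𝓝 0))
    {R δ : ℝ} (hR : 0 < R) (hδ : 0 < δ) :
    ∀ᶠ θ in atTop, ∀ x ∈ Icc (-R) R, |deriv (fclip σ θ (2 * R)) x - 1| ≤ δ := by
  obtain ⟨T, hT⟩ := exists_forall_abs_sub_sub_one_le htop hbot hδ
  filter_upwards [eventually_gt_atTop 0, eventually_ge_atTop (T / R)] with θ hθ hθT x hx
  have hTθ : T ≤ θ * R := (div_le_iff₀ hR).mp hθT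
  rw [(hasDerivAt_fclip hσ hθ.ne' (2 * R) x).deriv]
  exact hT _ _ (by nlinarith [hx.1]) (by nlinarith [hx.2])

end Clip

lemma abs_sub_self_le_of_abs_deriv_sub_one_le {g : ℝ → ℝ} {R δ x : ℝ}
    (hg : Differentiable ℝ g) (hg₀ : g 0 = 0)
    (hg' : ∀ y ∈ Icc (-R) R, |deriv g y - 1| ≤ δ) (hx : x ∈ Icc (-R) R) :
    |g x - x| ≤ δ * |x| := by
  have h₀ : (0 : ℝ) ∈ Icc (-R) R := ⟨by linarith [hx.1, hx.2], by linarith [hx.1, hx.2]⟩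
  have hdiff : ∀ y ∈ Icc (-R) R, DifferentiableAt ℝ (fun y => g y - y) y :=
    fun y _ => (hg y).sub differentiableAt_id
  have hbound : ∀ y ∈ Icc (-R) R, ‖deriv (fun y => g y - y) y‖ ≤ δ := fun y hy => by
    rw [((hg y).hasDerivAt.fun_sub (hasDerivAt_id' y)).deriv, Real.norm_eq_abs]
    exact hg' y hy
  simpa [hg₀, Real.norm_eq_abs] using
    (convex_Icc (-R) R).norm_image_sub_le_of_norm_deriv_le hdiff hbound h₀ hx

/-- For a GELU-like activation `σ(x) = xΦ(x)` with `Φ(x)+Φ(−x)=1` and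
`σ'(t) → 1` at `+∞`, `σ'(t) → 0` at `−∞`: the clipping function vanishes at `0`
for all `θ, b > 0`, and for every `ε, R > 0` there exist `θ, b > 0` such that
`f(·;θ,b)` approximates the identity in `C¹` on `[−R,R]` to within `ε`. -/
theorem stmt4 (σ Φ : ℝ → ℝ) (hσ : ContDiff ℝ 1 σ)
    (hσdef : ∀ x, σ x = x * Φ x) (hΦsym : ∀ x, Φ x + Φ (-x) = 1)
    (hdtop : Tendsto (deriv σ) atTop (nhds 1))
    (hdbot : Tendsto (deriv σ) atBot (nhds 0)) :
    (∀ θ b : ℝ, 0 < θ → 0 < b → fclip σ θ b 0 = 0) ∧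
    ∀ ε > (0 : ℝ), ∀ R > (0 : ℝ), ∃ θ b : ℝ, 0 < θ ∧ 0 < b ∧
      (∀ x ∈ Set.Icc (-R) R, |fclip σ θ b x - x| ≤ ε) ∧
      (∀ x ∈ Set.Icc (-R) R, |deriv (fclip σ θ b) x - 1| ≤ ε) := by
  have hdiff : Differentiable ℝ σ := hσ.differentiable one_ne_zero
  have hodd := sub_neg_eq_self_of_eq_mul hσdef hΦsym
  refine ⟨fun θ b hθ _ => fclip_zero hodd hθ.ne' b, fun ε hε R hR => ?_⟩
  set δ := min ε (ε / R)
  have hδ : 0 < δ := lt_min hε (div_pos hε hR)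
  obtain ⟨θ, hθ, hderiv⟩ := ((eventually_gt_atTop 0).and
    (eventually_forall_abs_deriv_fclip_sub_one_le hdiff hdtop hdbot hR hδ)).exists
  refine ⟨θ, 2 * R, hθ, by positivity, fun x hx => ?_,
    fun x hx => (hderiv x hx).trans (min_le_left _ _)⟩
  have hfdiff : Differentiable ℝ (fclip σ θ (2 * R)) :=
    fun y => (hasDerivAt_fclip hdiff hθ.ne' _ y).differentiableAt
  calc |fclip σ θ (2 * R) x - x|
      ≤ δ * |x| := abs_sub_self_le_of_abs_deriv_sub_one_le hfdiff
        (fclip_zero hodd hθ.ne' _) hderiv hx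
    _ ≤ ε / R * R := mul_le_mul (min_le_right _ _) (abs_le.mpr hx) (abs_nonneg x) (by positivity)
    _ = ε := div_mul_cancel₀ ε hR.ne'
end

section
/- Let σ ∈ C^∞(ℝ) be non-constant with σ'(x₀) ≠ 0 at some point x₀. For θ ∈ (0,1] define Id_θ(x) = (σ(x₀ + θx) − σ(x₀ − θx))/(2θσ'(x₀)). Then Id_θ(0) = 0 and Id_θ'(0) = 1, and for every R > 0 there exists a constant M (depending on σ, x₀, R but not θ) such that |Id_θ(x) − x| ≤ Mθ and |Id_θ'(x) − 1| ≤ Mθ for all x ∈ [−R, R]. Consequently, for every ε > 0 there exists θ ∈ (0,1] with ‖Id_θ − Id‖_{C¹([−R,R])} ≤ ε. -/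
/-- The smooth approximation of the identity
`Id_θ(x) = (σ(x₀ + θx) − σ(x₀ − θx))/(2θσ'(x₀))`. -/
noncomputable def idApprox (σ : ℝ → ℝ) (x₀ θ x : ℝ) : ℝ :=
  (σ (x₀ + θ * x) - σ (x₀ - θ * x)) / (2 * θ * deriv σ x₀)

open scoped ContDiff

lemma hasDerivAt_idApprox (σ : ℝ → ℝ) (hσ : Differentiable ℝ σ) (x₀ : ℝ)
    (h0 : deriv σ x₀ ≠ 0) {θ : ℝ} (hθ : θ ≠ 0) (x : ℝ) :
    HasDerivAt (idApprox σ x₀ θ)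
      ((deriv σ (x₀ + θ * x) + deriv σ (x₀ - θ * x)) / (2 * deriv σ x₀)) x := by
  have h1 : HasDerivAt (fun y : ℝ => x₀ + θ * y) θ x := by
    simpa using ((hasDerivAt_id x).const_mul θ).const_add x₀
  have h2 : HasDerivAt (fun y : ℝ => x₀ - θ * y) (-θ) x := by
    simpa [sub_eq_add_neg] using (((hasDerivAt_id x).const_mul θ).neg).const_add x₀
  have H1 := (hσ (x₀ + θ * x)).hasDerivAt.comp x h1
  have H2 := (hσ (x₀ - θ * x)).hasDerivAt.comp x h2
  have H := (H1.sub H2).div_const (2 * θ * deriv σ x₀)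
  refine H.congr_deriv ?_
  field_simp
  ring

/-- For smooth `σ` with `σ'(x₀) ≠ 0`: `Id_θ(0) = 0` and `Id_θ'(0) = 1`;
for every `R > 0` there is `M` (independent of `θ`) with
`|Id_θ(x) − x| ≤ Mθ` and `|Id_θ'(x) − 1| ≤ Mθ` on `[−R,R]` for `θ ∈ (0,1]`;
consequently for every `ε > 0` there exists `θ ∈ (0,1]` with
`‖Id_θ − Id‖_{C¹([−R,R])} ≤ ε`. -/
theorem stmt8 (σ : ℝ → ℝ) (hσ : ContDiff ℝ (⊤ : ℕ∞) σ) (x₀ : ℝ) (h0 : deriv σ x₀ ≠ 0) :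
    (∀ θ ∈ Set.Ioc (0 : ℝ) 1,
      idApprox σ x₀ θ 0 = 0 ∧ deriv (idApprox σ x₀ θ) 0 = 1) ∧
    (∀ R > (0 : ℝ), ∃ M : ℝ, ∀ θ ∈ Set.Ioc (0 : ℝ) 1, ∀ x ∈ Set.Icc (-R) R,
      |idApprox σ x₀ θ x - x| ≤ M * θ ∧ |deriv (idApprox σ x₀ θ) x - 1| ≤ M * θ) ∧
    (∀ R > (0 : ℝ), ∀ ε > (0 : ℝ), ∃ θ ∈ Set.Ioc (0 : ℝ) 1,
      ∀ x ∈ Set.Icc (-R) R,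
        |idApprox σ x₀ θ x - x| ≤ ε ∧ |deriv (idApprox σ x₀ θ) x - 1| ≤ ε) := by
  have hdiff : Differentiable ℝ σ := hσ.differentiable (by simp)
  have hσ' : ContDiff ℝ ∞ σ := hσ.of_le (by simp)
  have hd : ContDiff ℝ ∞ (deriv σ) := (contDiff_infty_iff_deriv.mp hσ').2
  have hdd : Differentiable ℝ (deriv σ) := hd.differentiable (by simp)
  have hcont : Continuous (deriv (deriv σ)) := (contDiff_infty_iff_deriv.mp hd).2.continuous
  have hpos : 0 < |deriv σ x₀| := abs_pos.mpr h0
  have part2 : ∀ R > (0 : ℝ), ∃ M : ℝ, ∀ θ ∈ Set.Ioc (0 : ℝ) 1, ∀ x ∈ Set.Icc (-R) R,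
      |idApprox σ x₀ θ x - x| ≤ M * θ ∧ |deriv (idApprox σ x₀ θ) x - 1| ≤ M * θ := by
    intro R hR
    obtain ⟨K₀, hK₀⟩ := (isCompact_Icc (a := x₀ - R) (b := x₀ + R)).exists_bound_of_continuousOn
      hcont.continuousOn
    set K : ℝ := max K₀ 0 with hKdef
    have hK : 0 ≤ K := le_max_right _ _
    have hKb : ∀ y ∈ Set.Icc (x₀ - R) (x₀ + R), ‖deriv (deriv σ) y‖ ≤ K :=
      fun y hy => (hK₀ y hy).trans (le_max_left _ _)
    have hlip : ∀ a ∈ Set.Icc (x₀ - R) (x₀ + R), ∀ b ∈ Set.Icc (x₀ - R) (x₀ + R),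
        |deriv σ a - deriv σ b| ≤ K * |a - b| := by
      intro a ha b hb
      have := Convex.norm_image_sub_le_of_norm_deriv_le
        (f := deriv σ) (fun y _ => hdd y) hKb (convex_Icc _ _) hb ha
      simpa [Real.norm_eq_abs] using this
    set C : ℝ := K * R / |deriv σ x₀| with hCdef
    have hC : 0 ≤ C := by positivity
    refine ⟨C * (R + 1), ?_⟩
    intro θ ⟨hθ0, hθ1⟩ x hx
    have hmem : ∀ y ∈ Set.Icc (-R) R, x₀ + θ * y ∈ Set.Icc (x₀ - R) (x₀ + R) ∧
        x₀ - θ * y ∈ Set.Icc (x₀ - R) (x₀ + R) := by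
      intro y hy
      obtain ⟨hy1, hy2⟩ := hy
      refine ⟨⟨?_, ?_⟩, ⟨?_, ?_⟩⟩ <;> nlinarith
    have hx₀mem : x₀ ∈ Set.Icc (x₀ - R) (x₀ + R) := by
      constructor <;> linarith
    have hDbound : ∀ y ∈ Set.Icc (-R) R, |deriv (idApprox σ x₀ θ) y - 1| ≤ C * θ := by
      intro y hy
      obtain ⟨hm1, hm2⟩ := hmem y hy
      rw [(hasDerivAt_idApprox σ hdiff x₀ h0 hθ0.ne' y).deriv]
      have e : (deriv σ (x₀ + θ * y) + deriv σ (x₀ - θ * y)) / (2 * deriv σ x₀) - 1 =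
          ((deriv σ (x₀ + θ * y) - deriv σ x₀) + (deriv σ (x₀ - θ * y) - deriv σ x₀)) /
            (2 * deriv σ x₀) := by
        field_simp
        ring
      rw [e, abs_div]
      have h1 : |deriv σ (x₀ + θ * y) - deriv σ x₀| ≤ K * (θ * R) := by
        have := hlip _ hm1 _ hx₀mem
        have hay : |x₀ + θ * y - x₀| = θ * |y| := by
          rw [add_sub_cancel_left, abs_mul, abs_of_pos hθ0]
        rw [hay] at this
        have hyR : |y| ≤ R := abs_le.mpr hy
        exact this.trans (mul_le_mul_of_nonneg_left
          (mul_le_mul_of_nonneg_left hyR hθ0.le) hK)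
      have h2 : |deriv σ (x₀ - θ * y) - deriv σ x₀| ≤ K * (θ * R) := by
        have := hlip _ hm2 _ hx₀mem
        have hay : |x₀ - θ * y - x₀| = θ * |y| := by
          rw [sub_sub_cancel_left, abs_neg, abs_mul, abs_of_pos hθ0]
        rw [hay] at this
        have hyR : |y| ≤ R := abs_le.mpr hy
        exact this.trans (mul_le_mul_of_nonneg_left
          (mul_le_mul_of_nonneg_left hyR hθ0.le) hK)
      have habs : |2 * deriv σ x₀| = 2 * |deriv σ x₀| := by
        rw [abs_mul]; norm_num
      rw [habs]
      calc |_ + _| / (2 * |deriv σ x₀|)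
          ≤ (K * (θ * R) + K * (θ * R)) / (2 * |deriv σ x₀|) := by
            gcongr
            exact (abs_add_le _ _).trans (add_le_add h1 h2)
        _ = C * θ := by
            rw [hCdef]
            field_simp
            ring
    have hder : ∀ y : ℝ, HasDerivAt (fun z => idApprox σ x₀ θ z - z)
        (deriv (idApprox σ x₀ θ) y - 1) y := by
      intro y
      have h := hasDerivAt_idApprox σ hdiff x₀ h0 hθ0.ne' y
      exact (h.differentiableAt.hasDerivAt).sub (hasDerivAt_id y)
    have h00 : (0 : ℝ) ∈ Set.Icc (-R) R := by constructor <;> linarith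
    have hval := Convex.norm_image_sub_le_of_norm_deriv_le
      (f := fun z => idApprox σ x₀ θ z - z)
      (fun y _ => (hder y).differentiableAt)
      (fun y hy => by rw [Real.norm_eq_abs, (hder y).deriv]; exact hDbound y hy)
      (convex_Icc _ _) h00 hx
    have h00v : idApprox σ x₀ θ 0 = 0 := by simp [idApprox]
    simp only [h00v, sub_zero, Real.norm_eq_abs] at hval
    have hxR : |x| ≤ R := abs_le.mpr hx
    constructor
    · refine hval.trans ?_
      nlinarith [mul_nonneg hC hθ0.le]
    · refine (hDbound x hx).trans ?_
      nlinarith [mul_nonneg (mul_nonneg hC hR.le) hθ0.le, mul_nonneg hC hθ0.le]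
  refine ⟨?_, part2, ?_⟩
  · intro θ ⟨hθ0, hθ1⟩
    refine ⟨by simp [idApprox], ?_⟩
    rw [(hasDerivAt_idApprox σ hdiff x₀ h0 hθ0.ne' 0).deriv]
    simp only [mul_zero, add_zero, sub_zero]
    field_simp
    ring
  · intro R hR ε hε
    obtain ⟨M, hM⟩ := part2 R hR
    set M' : ℝ := max M 1 with hM'def
    have hM'pos : 0 < M' := lt_of_lt_of_le one_pos (le_max_right _ _)
    set θ : ℝ := min 1 (ε / M') with hθdef
    have hθpos : 0 < θ := lt_min one_pos (div_pos hε hM'pos)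
    have hθmem : θ ∈ Set.Ioc (0 : ℝ) 1 := ⟨hθpos, min_le_left _ _⟩
    refine ⟨θ, hθmem, fun x hx => ?_⟩
    obtain ⟨hb1, hb2⟩ := hM θ hθmem x hx
    have hle : M * θ ≤ ε := by
      calc M * θ ≤ M' * (ε / M') :=
            mul_le_mul (le_max_left _ _) (min_le_right _ _) hθpos.le hM'pos.le
        _ = ε := by field_simp
    exact ⟨hb1.trans hle, hb2.trans hle⟩
end

section
/- Let X be a Hilbert space and f, g : X → ℝ with f twice differentiable and λ-strongly convex (D²f(a)(h,h) ≥ λ‖h‖² for all a, h) with global minimizer a⋆. Let R > 0 and suppose g is weakly lower semicontinuous on the closed ball B_R(a⋆), Fréchet differentiable, and sup_{a ∈ B_R(a⋆)} |f(a) − g(a)| < λR²/4. Then g attains a minimum over B_R(a⋆) at some point a† lying in the open ball {‖a − a⋆‖ < R}, and at this point Dg(a†) = 0. -/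
open Filter Topology TopologicalSpace Metric
open scoped RealInnerProductSpace

/-! Strong convexity makes `f` grow like `λ/2 ‖a - a⋆‖²` away from its minimizer, so on the
sphere of radius `R` it exceeds `f a⋆` by `λR²/2`, twice the allowed error `λR²/4`. Hence the
perturbation `g` is larger on the sphere than at the centre, and a minimizer of `g` over the
ball, which exists by the direct method (bounded sequences in a Hilbert space have weakly
convergent subsequences), lies in the interior, where `Dg` vanishes. -/

theorem le_sub_of_hasDerivAt_of_monotone {ψ ψ' : ℝ → ℝ} (hψ : ∀ t, HasDerivAt ψ (ψ' t) t)
    (hmono : Monotone ψ') : ψ' 0 ≤ ψ 1 - ψ 0 := by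
  obtain ⟨t, ht, hslope⟩ := exists_hasDerivAt_eq_slope ψ ψ' zero_lt_one
    (fun s _ => (hψ s).continuousAt.continuousWithinAt) (fun s _ => hψ s)
  rw [sub_zero, div_one] at hslope
  exact hslope ▸ hmono ht.1.le

section StrongConvexity

variable {E : Type*} [NormedAddCommGroup E] [NormedSpace ℝ E]

theorem add_apply_sub_add_sq_le_of_le_hessian {f : E → ℝ} {f' : E → E →L[ℝ] ℝ}
    {f'' : E → E →L[ℝ] E →L[ℝ] ℝ} (hf' : ∀ a, HasFDerivAt f (f' a) a)
    (hf'' : ∀ a, HasFDerivAt f' (f'' a) a) {lam : ℝ} (hconv : ∀ a h, lam * ‖h‖ ^ 2 ≤ f'' a h h)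
    (a b : E) : f a + f' a (b - a) + lam / 2 * ‖b - a‖ ^ 2 ≤ f b := by
  set h := b - a
  let c : ℝ → E := fun t => a + t • h
  have hc (t : ℝ) : HasDerivAt c h t := by
    have := ((hasDerivAt_id t).smul_const h).const_add a
    rwa [one_smul] at this
  have hψ (t : ℝ) : HasDerivAt (fun s => f (c s) - lam / 2 * ‖h‖ ^ 2 * s ^ 2)
      (f' (c t) h - lam * ‖h‖ ^ 2 * t) t := by
    refine (((hf' (c t)).comp_hasDerivAt t (hc t)).sub
      ((hasDerivAt_pow 2 t).const_mul (lam / 2 * ‖h‖ ^ 2))).congr_deriv ?_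
    push_cast
    ring
  have hψ' (t : ℝ) : HasDerivAt (fun s => f' (c s) h - lam * ‖h‖ ^ 2 * s)
      (f'' (c t) h h - lam * ‖h‖ ^ 2) t := by
    refine (((ContinuousLinearMap.apply ℝ ℝ h).hasFDerivAt.comp_hasDerivAt t
      ((hf'' (c t)).comp_hasDerivAt t (hc t))).sub
      ((hasDerivAt_id t).const_mul (lam * ‖h‖ ^ 2))).congr_deriv ?_
    simp
  have key := le_sub_of_hasDerivAt_of_monotone hψ
    (monotone_of_hasDerivAt_nonneg hψ' fun t => sub_nonneg.2 (hconv (c t) h))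
  simp only [c, zero_smul, add_zero, one_smul, mul_zero, sub_zero, h, add_sub_cancel] at key
  linarith

end StrongConvexity

section WeakCompactness

variable {X : Type*} [NormedAddCommGroup X] [InnerProductSpace ℝ X]

def WeakTendsto (u : ℕ → X) (x : X) : Prop :=
  ∀ y, Tendsto (fun n => ⟪u n, y⟫) atTop (𝓝 ⟪x, y⟫)

theorem WeakTendsto.norm_sub_le {u : ℕ → X} {x c : X} {R : ℝ} (hu : WeakTendsto u x)
    (hR : ∀ n, ‖u n - c‖ ≤ R) : ‖x - c‖ ≤ R := by
  have hlim : Tendsto (fun n => ⟪u n - c, x - c⟫) atTop (𝓝 ⟪x - c, x - c⟫) := by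
    simpa only [inner_sub_left] using (hu (x - c)).sub_const ⟪c, x - c⟫
  have hsq : ‖x - c‖ ^ 2 ≤ R * ‖x - c‖ := by
    rw [← real_inner_self_eq_norm_sq]
    exact le_of_tendsto' hlim fun n =>
      (real_inner_le_norm _ _).trans (mul_le_mul_of_nonneg_right (hR n) (norm_nonneg _))
  nlinarith [norm_nonneg (x - c), (norm_nonneg (u 0 - c)).trans (hR 0)]

theorem exists_weakTendsto_subseq_of_separableSpace [CompleteSpace X] [SeparableSpace X]
    {u : ℕ → X} {M : ℝ} (hu : ∀ n, ‖u n‖ ≤ M) :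
    ∃ x φ, StrictMono φ ∧ WeakTendsto (u ∘ φ) x := by
  let v : ℕ → WeakDual ℝ X := fun n => StrongDual.toWeakDual (InnerProductSpace.toDual ℝ X (u n))
  have hv : ∀ n, v n ∈ WeakDual.toStrongDual ⁻¹' closedBall 0 M := fun n => by
    simpa [v] using hu n
  obtain ⟨ℓ, -, φ, hφ, hlim⟩ := WeakDual.isSeqCompact_closedBall ℝ X 0 M hv
  refine ⟨(InnerProductSpace.toDual ℝ X).symm (WeakDual.toStrongDual ℓ), φ, hφ, fun y => ?_⟩
  rw [InnerProductSpace.toDual_symm_apply]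
  exact ((WeakDual.eval_continuous y).tendsto ℓ).comp hlim

/-- Reduces to the separable case in the closed span `K` of the sequence: both sides of
`⟪u n, y⟫ → ⟪x, y⟫` only see the projection of `y` onto `K`. -/
theorem exists_weakTendsto_subseq [CompleteSpace X] {u : ℕ → X} {M : ℝ} (hu : ∀ n, ‖u n‖ ≤ M) :
    ∃ x φ, StrictMono φ ∧ WeakTendsto (u ∘ φ) x := by
  set S := Submodule.span ℝ (Set.range u)
  set K := S.topologicalClosure
  have huK : ∀ n, u n ∈ K := fun n =>
    S.le_topologicalClosure (Submodule.subset_span (Set.mem_range_self n))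
  have : CompleteSpace K := S.isClosed_topologicalClosure.completeSpace_coe
  have : SeparableSpace K := by
    have := ((Set.countable_range u).isSeparable.span (R := ℝ)).closure
    rw [← S.topologicalClosure_coe] at this
    exact this.separableSpace
  obtain ⟨x, φ, hφ, hx⟩ :=
    exists_weakTendsto_subseq_of_separableSpace (u := fun n => (⟨u n, huK n⟩ : K)) (M := M) hu
  exact ⟨x, φ, hφ, fun y => by simpa using hx (K.orthogonalProjectionOnto y)⟩

theorem exists_isMinOn_closedBall_of_weakLowerSemicontinuous [CompleteSpace X] {g : X → ℝ}
    {c : X} {R : ℝ} (hR : 0 ≤ R) (hbdd : BddBelow (g '' closedBall c R))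
    (hlsc : ∀ (x : X) (u : ℕ → X), (∀ n, ‖u n - c‖ ≤ R) → ‖x - c‖ ≤ R → WeakTendsto u x →
      g x ≤ liminf (fun n => g (u n)) atTop) :
    ∃ x ∈ closedBall c R, IsMinOn g (closedBall c R) x := by
  obtain ⟨w, -, hw, hwg⟩ := exists_seq_tendsto_sInf ((nonempty_closedBall.2 hR).image g) hbdd
  choose v hv hgv using hwg
  have hvc : ∀ n, ‖v n - c‖ ≤ R := fun n => mem_closedBall_iff_norm.1 (hv n)
  obtain ⟨x, φ, hφ, hx⟩ := exists_weakTendsto_subseq (u := v) (M := ‖c‖ + R) fun n => by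
    linarith [norm_le_insert' (v n) c, hvc n]
  have hxc : ‖x - c‖ ≤ R := hx.norm_sub_le fun n => hvc (φ n)
  have hlim : Tendsto (fun n => g (v (φ n))) atTop (𝓝 (sInf (g '' closedBall c R))) := by
    simpa only [hgv, Function.comp_def] using hw.comp hφ.tendsto_atTop
  have hgx : g x ≤ sInf (g '' closedBall c R) := by
    simpa [hlim.liminf_eq] using hlsc x (v ∘ φ) (fun n => hvc (φ n)) hxc hx
  exact ⟨x, mem_closedBall_iff_norm.2 hxc, fun a ha => hgx.trans (csInf_le hbdd ⟨a, ha, rfl⟩)⟩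

end WeakCompactness

/-- If `f` is twice differentiable and λ-strongly convex with global minimizer
`a⋆`, and `g` is differentiable, sequentially weakly lower semicontinuous on the
closed ball `B_R(a⋆)`, and satisfies `|f − g| < λR²/4` there, then `g` attains a
minimum over `B_R(a⋆)` at an interior point `a†`, at which `Dg(a†) = 0`. -/
theorem stmt17 {X : Type*} [NormedAddCommGroup X] [InnerProductSpace ℝ X]
    [CompleteSpace X]
    (f g : X → ℝ) (f' : X → X →L[ℝ] ℝ) (f'' : X → X →L[ℝ] X →L[ℝ] ℝ)
    (g' : X → X →L[ℝ] ℝ)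
    (hf' : ∀ a, HasFDerivAt f (f' a) a) (hf'' : ∀ a, HasFDerivAt f' (f'' a) a)
    (lam : ℝ) (hlam : 0 < lam)
    (hconv : ∀ a h : X, lam * ‖h‖ ^ 2 ≤ f'' a h h)
    (astar : X) (hmin : ∀ a, f astar ≤ f a)
    (R : ℝ) (hR : 0 < R)
    (hg' : ∀ a, HasFDerivAt g (g' a) a)
    (hlsc : ∀ (x : X) (u : ℕ → X), (∀ n, ‖u n - astar‖ ≤ R) → ‖x - astar‖ ≤ R →
      (∀ y : X, Tendsto (fun n => ⟪u n, y⟫) atTop (nhds ⟪x, y⟫)) →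
      g x ≤ Filter.liminf (fun n => g (u n)) atTop)
    (happrox : ∀ a, ‖a - astar‖ ≤ R → |f a - g a| < lam * R ^ 2 / 4) :
    ∃ adag : X, ‖adag - astar‖ < R ∧
      (∀ a, ‖a - astar‖ ≤ R → g adag ≤ g a) ∧ g' adag = 0 := by
  have hstar : f' astar = 0 := IsLocalMin.hasFDerivAt_eq_zero (.of_forall hmin) (hf' astar)
  have hgrowth (a : X) : f astar + lam / 2 * ‖a - astar‖ ^ 2 ≤ f a := by
    simpa [hstar] using add_apply_sub_add_sq_le_of_le_hessian hf' hf'' hconv astar a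
  have hbdd : BddBelow (g '' closedBall astar R) := ⟨f astar - lam * R ^ 2 / 4, by
    rintro _ ⟨a, ha, rfl⟩
    linarith [(abs_lt.1 (happrox a (mem_closedBall_iff_norm.1 ha))).2, hmin a]⟩
  obtain ⟨x, hxB, hxmin⟩ :=
    exists_isMinOn_closedBall_of_weakLowerSemicontinuous hR.le hbdd hlsc
  have hcentre : ‖astar - astar‖ ≤ R := by simpa using hR.le
  have hx : ‖x - astar‖ ≤ R := mem_closedBall_iff_norm.1 hxB
  have hxR : ‖x - astar‖ < R := by
    have hxa : g x ≤ g astar := hxmin (mem_closedBall_self hR.le)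
    have hgap : lam / 2 * ‖x - astar‖ ^ 2 < lam / 2 * R ^ 2 := by
      linarith [(abs_lt.1 (happrox x hx)).2, (abs_lt.1 (happrox astar hcentre)).1, hgrowth x]
    exact (pow_lt_pow_iff_left₀ (norm_nonneg _) hR.le two_ne_zero).1
      (lt_of_mul_lt_mul_left hgap (by positivity))
  have hlocal : IsLocalMin g x :=
    hxmin.isLocalMin (closedBall_mem_nhds_of_mem (mem_ball_iff_norm.2 hxR))
  exact ⟨x, hxR, fun a ha => hxmin (mem_closedBall_iff_norm.2 ha),
    hlocal.hasFDerivAt_eq_zero (hg' x)⟩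
end

section
/- Let σ : ℝ → ℝ be continuously differentiable with σ'(t) → 1 as t → ∞ and σ'(t) → 0 as t → −∞. For θ, b > 0 define f(x) = (σ(θ(x−b−1)) − σ(θ(x−b)))/θ + 1. Then f can be written as f(x) = (1/θ)∫_{θ(x−b−1)}^{θ(x−b)} (1 − σ'(t)) dt, and for any ε > 0 and R > 1, choosing b = 2R and θ sufficiently large yields: |f(x) − 1| ≤ ε and |f'(x)| ≤ ε for all x ∈ [0, R], and |f(x)| ≤ ε and |f'(x)| ≤ ε for all x ≥ 4R. -/
/-!
On `[0, R]` with `b = 2R`, the integration window `[θ(x-b-1), θ(x-b)]` lies in `(-∞, -θR]`,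
where `σ' ≈ 0`; for `x ≥ 4R` it lies in `[θR, ∞)`, where `σ' ≈ 1`. Since the window has
length `θ`, `f - 1` and `f` are averages of `-σ'` and `1 - σ'` over it, and `f'` is the
difference of the values of `σ'` at its endpoints; all of these are small once `θ` is large.
-/

open Filter intervalIntegral

noncomputable def fcut (σ : ℝ → ℝ) (θ b x : ℝ) : ℝ :=
  (σ (θ * (x - b - 1)) - σ (θ * (x - b))) / θ + 1

lemma exists_pos_forall_abs_sub_le_of_tendsto {g : ℝ → ℝ} {l m δ R : ℝ}
    (htop : Tendsto g atTop (nhds l)) (hbot : Tendsto g atBot (nhds m)) (hδ : 0 < δ)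
    (hR : 0 < R) :
    ∃ θ > 0, (∀ t ≥ θ * R, |g t - l| ≤ δ) ∧ (∀ t ≤ -(θ * R), |g t - m| ≤ δ) := by
  have hscale : Tendsto (fun θ : ℝ => θ * R) atTop atTop := tendsto_id.atTop_mul_const hR
  have hnear (c : ℝ) : ∀ᶠ t in nhds c, |t - c| ≤ δ := by
    simpa only [Real.dist_eq] using Metric.eventually_nhds_iff_ball.2 ⟨δ, hδ, fun _ h => h.le⟩
  have hright : ∀ᶠ θ in atTop, ∀ t ≥ θ * R, |g t - l| ≤ δ :=
    hscale.eventually (eventually_forall_ge_atTop.2 (htop.eventually (hnear l)))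
  have hleft : ∀ᶠ θ in atTop, ∀ t ≤ -(θ * R), |g t - m| ≤ δ :=
    (tendsto_neg_atTop_atBot.comp hscale).eventually
      (eventually_forall_le_atBot.2 (hbot.eventually (hnear m)))
  obtain ⟨θ, hθ, hr, hl⟩ := ((eventually_gt_atTop 0).and (hright.and hleft)).exists
  exact ⟨θ, hθ, hr, hl⟩

lemma abs_one_div_mul_integral_le {g : ℝ → ℝ} {a c θ δ : ℝ} (hθ : 0 < θ) (hca : c - a = θ)
    (hg : ∀ t ∈ Set.Icc a c, |g t| ≤ δ) :
    |1 / θ * ∫ t in a..c, g t| ≤ δ := by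
  have hint : |∫ t in a..c, g t| ≤ δ * θ := by
    have := norm_integral_le_of_norm_le_const (a := a) (b := c) (f := g) (C := δ) fun t ht => by
      rw [Set.uIoc_of_le (by linarith)] at ht
      exact hg t (Set.Ioc_subset_Icc_self ht)
    rwa [hca, abs_of_pos hθ] at this
  rw [abs_mul, abs_of_pos (one_div_pos.2 hθ), one_div_mul_eq_div, div_le_iff₀ hθ]
  exact hint

section

variable {σ : ℝ → ℝ} {θ : ℝ}

lemma hasDerivAt_fcut (hσ : Differentiable ℝ σ) (hθ : θ ≠ 0) (b x : ℝ) :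
    HasDerivAt (fcut σ θ b) (deriv σ (θ * (x - b - 1)) - deriv σ (θ * (x - b))) x := by
  have h₁ : HasDerivAt (fun y : ℝ => θ * (y - b - 1)) θ x := by
    simpa using (((hasDerivAt_id x).sub_const b).sub_const 1).const_mul θ
  have h₂ : HasDerivAt (fun y : ℝ => θ * (y - b)) θ x := by
    simpa using ((hasDerivAt_id x).sub_const b).const_mul θ
  have H : HasDerivAt (fcut σ θ b)
      ((deriv σ (θ * (x - b - 1)) * θ - deriv σ (θ * (x - b)) * θ) / θ) x :=
    ((((hσ _).hasDerivAt.comp x h₁).sub ((hσ _).hasDerivAt.comp x h₂)).div_const θ).add_const 1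
  rwa [← sub_mul, mul_div_cancel_right₀ _ hθ] at H

lemma integral_deriv_of_contDiff (hσ : ContDiff ℝ 1 σ) (a c : ℝ) :
    ∫ t in a..c, deriv σ t = σ c - σ a :=
  integral_deriv_eq_sub (fun t _ => hσ.differentiable one_ne_zero t)
    ((hσ.continuous_deriv le_rfl).intervalIntegrable a c)

lemma fcut_sub_one_eq_integral (hσ : ContDiff ℝ 1 σ) (b x : ℝ) :
    fcut σ θ b x - 1 = 1 / θ * ∫ t in θ * (x - b - 1)..θ * (x - b), -deriv σ t := by
  rw [intervalIntegral.integral_neg, integral_deriv_of_contDiff hσ, fcut]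
  ring

lemma fcut_eq_integral (hσ : ContDiff ℝ 1 σ) (hθ : θ ≠ 0) (b x : ℝ) :
    fcut σ θ b x = 1 / θ * ∫ t in θ * (x - b - 1)..θ * (x - b), (1 - deriv σ t) := by
  rw [intervalIntegral.integral_sub intervalIntegrable_const
      ((hσ.continuous_deriv le_rfl).intervalIntegrable _ _), intervalIntegral.integral_const,
    integral_deriv_of_contDiff hσ, smul_eq_mul, mul_one, fcut]
  field_simp
  ring

lemma fcut_bounds_of_abs_deriv_le (hσ : ContDiff ℝ 1 σ) (hθ : 0 < θ) {b x δ : ℝ}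
    (h : ∀ t ≤ θ * (x - b), |deriv σ t| ≤ δ) :
    |fcut σ θ b x - 1| ≤ δ ∧ |deriv (fcut σ θ b) x| ≤ 2 * δ := by
  have hwindow : θ * (x - b - 1) ≤ θ * (x - b) := by nlinarith
  constructor
  · rw [fcut_sub_one_eq_integral hσ]
    exact abs_one_div_mul_integral_le hθ (by ring) fun t ht => (abs_neg _).trans_le (h t ht.2)
  · rw [(hasDerivAt_fcut (hσ.differentiable one_ne_zero) hθ.ne' b x).deriv]
    have h₁ := abs_le.1 (h _ hwindow)
    have h₂ := abs_le.1 (h _ le_rfl)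
    exact abs_le.2 ⟨by linarith, by linarith⟩

lemma fcut_bounds_of_abs_deriv_sub_one_le (hσ : ContDiff ℝ 1 σ) (hθ : 0 < θ) {b x δ : ℝ}
    (h : ∀ t ≥ θ * (x - b - 1), |deriv σ t - 1| ≤ δ) :
    |fcut σ θ b x| ≤ δ ∧ |deriv (fcut σ θ b) x| ≤ 2 * δ := by
  have hwindow : θ * (x - b - 1) ≤ θ * (x - b) := by nlinarith
  constructor
  · rw [fcut_eq_integral hσ hθ.ne']
    exact abs_one_div_mul_integral_le hθ (by ring) fun t ht =>
      (abs_sub_comm _ _).trans_le (h t ht.1)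
  · rw [(hasDerivAt_fcut (hσ.differentiable one_ne_zero) hθ.ne' b x).deriv]
    have h₁ := abs_le.1 (h _ le_rfl)
    have h₂ := abs_le.1 (h _ hwindow)
    exact abs_le.2 ⟨by linarith, by linarith⟩

end

/-- For `σ` `C¹` with `σ'(t) → 1` at `+∞` and `σ'(t) → 0` at `−∞`: the cutoff
function has the integral representation
`f(x) = (1/θ)∫_{θ(x−b−1)}^{θ(x−b)} (1 − σ'(t)) dt`, and for any `ε > 0`,
`R > 1`, taking `b = 2R` and `θ` large enough gives `|f − 1| ≤ ε`, `|f'| ≤ ε`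
on `[0,R]` and `|f| ≤ ε`, `|f'| ≤ ε` for `x ≥ 4R`. -/
theorem stmt19 (σ : ℝ → ℝ) (hσ : ContDiff ℝ 1 σ)
    (hdtop : Tendsto (deriv σ) atTop (nhds 1))
    (hdbot : Tendsto (deriv σ) atBot (nhds 0)) :
    (∀ θ b x : ℝ, 0 < θ →
      fcut σ θ b x
        = (1 / θ) * ∫ t in (θ * (x - b - 1))..(θ * (x - b)), (1 - deriv σ t)) ∧
    (∀ ε > (0 : ℝ), ∀ R > (1 : ℝ), ∃ θ > (0 : ℝ),
      (∀ x ∈ Set.Icc (0 : ℝ) R,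
        |fcut σ θ (2 * R) x - 1| ≤ ε ∧ |deriv (fcut σ θ (2 * R)) x| ≤ ε) ∧
      (∀ x ≥ 4 * R,
        |fcut σ θ (2 * R) x| ≤ ε ∧ |deriv (fcut σ θ (2 * R)) x| ≤ ε)) := by
  refine ⟨fun θ b x hθ => fcut_eq_integral hσ hθ.ne' b x, fun ε hε R hR => ?_⟩
  obtain ⟨θ, hθ, hright, hleft⟩ :=
    exists_pos_forall_abs_sub_le_of_tendsto hdtop hdbot (half_pos hε) (by linarith : (0 : ℝ) < R)
  refine ⟨θ, hθ, fun x hx => ?_, fun x hx => ?_⟩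
  · obtain ⟨hval, hder⟩ := fcut_bounds_of_abs_deriv_le hσ hθ (b := 2 * R) (x := x) fun t ht => by
      simpa only [sub_zero] using hleft t (by nlinarith [hx.2])
    exact ⟨by linarith, by linarith⟩
  · obtain ⟨hval, hder⟩ := fcut_bounds_of_abs_deriv_sub_one_le hσ hθ (b := 2 * R) (x := x)
      fun t ht => hright t (by nlinarith)
    exact ⟨by linarith, by linarith⟩
end
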